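/- arXiv:1312.7217 — 6 statements merged into one kernel-verified Lean document; each statement's English description precedes it below -/
import Mathlib

section
/- Let (E, 𝒮) be a set system with E finite and 𝒮 finite, let X ⊆ E, let e ∈ X, and let 𝒬 ⊆ 𝒮 be the collection of all sets in 𝒮 containing e. Fix an integer τ ≥ 1. If every collection 𝒜 ⊆ 𝒬 of cardinality exactly τ+1 is τ-collapsible within X, then every collection 𝒫 ⊆ 𝒬 is τ-collapsible within X. -/
/-- A collection `P` of sets (each a subset of the universe `α`) is `τ`-collapsible
within `X`: there exist at most `τ` sets of `P` whose traces on `X` cover the trace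
of the whole collection `P` on `X`. -/
def Collapsible {α : Type*} (τ : ℕ) (X : Set α) (P : Set (Set α)) : Prop :=
  ∃ R : Finset (Set α), ↑R ⊆ P ∧ R.card ≤ τ ∧
    (⋃ S ∈ P, S ∩ X) = (⋃ S ∈ (R : Set (Set α)), S ∩ X)

lemma collapsible_finset_aux {α : Type*} (Q : Set (Set α)) (τ : ℕ)
    (X : Set α)
    (h : ∀ 𝒜 : Finset (Set α), ↑𝒜 ⊆ Q → 𝒜.card = τ + 1 →
      Collapsible τ X ↑𝒜) :
    ∀ n : ℕ, ∀ P : Finset (Set α), P.card ≤ n → ↑P ⊆ Q → Collapsible τ X ↑P := by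
  classical
  intro n
  induction n with
  | zero =>
    intro P hcard _
    refine ⟨P, subset_rfl, ?_, rfl⟩
    omega
  | succ n ih =>
    intro P hcard hPQ
    by_cases hle : P.card ≤ τ
    · exact ⟨P, subset_rfl, hle, rfl⟩
    · push_neg at hle
      obtain ⟨𝒜, h𝒜P, h𝒜card⟩ := Finset.exists_subset_card_eq (by omega : τ + 1 ≤ P.card)
      obtain ⟨R, hR𝒜, hRcard, hRunion⟩ := h 𝒜 ((Finset.coe_subset.mpr h𝒜P).trans hPQ) h𝒜card
      set P' : Finset (Set α) := (P \ 𝒜) ∪ R with hP'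
      have hR𝒜' : R ⊆ 𝒜 := by exact_mod_cast hR𝒜
      have hP'P : P' ⊆ P := by
        apply Finset.union_subset (Finset.sdiff_subset)
        exact hR𝒜'.trans h𝒜P
      have hP'card : P'.card ≤ n := by
        have h1 : P'.card ≤ (P \ 𝒜).card + R.card := Finset.card_union_le _ _
        have h2 : (P \ 𝒜).card = P.card - 𝒜.card := Finset.card_sdiff_of_subset h𝒜P
        have h3 : 𝒜.card ≤ P.card := Finset.card_le_card h𝒜P
        omega
      obtain ⟨R', hR'P', hR'card, hR'union⟩ := ih P' hP'card ((Finset.coe_subset.mpr hP'P).trans hPQ)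
      refine ⟨R', hR'P'.trans (Finset.coe_subset.mpr hP'P), hR'card, ?_⟩
      have hPsplit : (P : Set (Set α)) = ↑(P \ 𝒜) ∪ ↑𝒜 := by
        rw [← Finset.coe_union, Finset.sdiff_union_of_subset h𝒜P]
      have hP'split : (P' : Set (Set α)) = ↑(P \ 𝒜) ∪ ↑R := by
        rw [hP', Finset.coe_union]
      calc (⋃ S ∈ (P : Set (Set α)), S ∩ X)
          = (⋃ S ∈ (↑(P \ 𝒜) : Set (Set α)), S ∩ X) ∪ (⋃ S ∈ (𝒜 : Set (Set α)), S ∩ X) := by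
            rw [hPsplit, Set.biUnion_union]
        _ = (⋃ S ∈ (↑(P \ 𝒜) : Set (Set α)), S ∩ X) ∪ (⋃ S ∈ (R : Set (Set α)), S ∩ X) := by
            rw [hRunion]
        _ = (⋃ S ∈ (P' : Set (Set α)), S ∩ X) := by rw [hP'split, Set.biUnion_union]
        _ = (⋃ S ∈ (R' : Set (Set α)), S ∩ X) := hR'union

/-- If every collection `𝒜 ⊆ 𝒬` of cardinality exactly `τ + 1` is `τ`-collapsible
within `X` (where `𝒬` is the collection of all sets of `𝒮` containing `e`), then
every collection `𝒫 ⊆ 𝒬` is `τ`-collapsible within `X`. -/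
theorem collapsible_of_small_collapsible {α : Type*} [Fintype α]
    (𝒮 : Set (Set α)) (h𝒮 : 𝒮.Finite) (τ : ℕ) (hτ : 1 ≤ τ)
    (X : Set α) (e : α) (heX : e ∈ X)
    (h : ∀ 𝒜 : Finset (Set α), ↑𝒜 ⊆ {S ∈ 𝒮 | e ∈ S} → 𝒜.card = τ + 1 →
      Collapsible τ X ↑𝒜) :
    ∀ P : Set (Set α), P ⊆ {S ∈ 𝒮 | e ∈ S} → Collapsible τ X P := by
  intro P hPQ
  have hPfin : P.Finite := h𝒮.subset (hPQ.trans (Set.sep_subset _ _))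
  have := collapsible_finset_aux {S ∈ 𝒮 | e ∈ S} τ X h hPfin.toFinset.card
    hPfin.toFinset le_rfl (by rw [Set.Finite.coe_toFinset]; exact hPQ)
  rwa [Set.Finite.coe_toFinset] at this
end

section
/- Let B be a finite nonempty set of integers with |B| = r, and let 𝒫 be a finite nonempty family of closed integer intervals, each of which intersects B. Then there exists a subfamily 𝒯 ⊆ 𝒫 with |𝒯| ≤ 2r such that the union of all intervals in 𝒯 equals the union of all intervals in 𝒫. (Consequently, in the set system defined by the bag interval cover problem with girth g—elements are bags of timeslots, an interval covers a bag if it spans at least one of its timeslots—every bag is a 2g-SNC element within any subset of bags containing it.) -/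
/-- Bag interval cover: if `B` is a finite nonempty set of `r` integers and every
interval in a finite nonempty family `P` of closed integer intervals intersects `B`,
then some subfamily of at most `2 * r` intervals has the same union as `P`.
(This is the `2g`-SNC property of bags in the bag interval cover problem.) -/
theorem bag_interval_cover_SNC (B : Finset ℤ) (r : ℕ) (hBne : B.Nonempty)
    (hBcard : B.card = r)
    (P : Finset (ℤ × ℤ)) (hne : P.Nonempty)
    (hvalid : ∀ p ∈ P, p.1 ≤ p.2)
    (hcov : ∀ p ∈ P, ∃ b ∈ B, p.1 ≤ b ∧ b ≤ p.2) :
    ∃ 𝒯 ⊆ P, 𝒯.card ≤ 2 * r ∧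
      (⋃ p ∈ 𝒯, Set.Icc p.1 p.2) = ⋃ p ∈ P, Set.Icc p.1 p.2 := by
  classical
  set cover : ℤ → Finset (ℤ × ℤ) := fun b => P.filter (fun p => p.1 ≤ b ∧ b ≤ p.2) with hcover
  have hmem : ∀ b : ℤ, ∀ p ∈ cover b, p ∈ P ∧ p.1 ≤ b ∧ b ≤ p.2 := by
    intro b p hp
    simpa [hcover, Finset.mem_filter] using hp
  choose f hf hfmin using fun (b : ℤ) (h : (cover b).Nonempty) =>
    Finset.exists_min_image (cover b) Prod.fst h
  choose g hg hgmax using fun (b : ℤ) (h : (cover b).Nonempty) =>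
    Finset.exists_max_image (cover b) Prod.snd h
  set F : ℤ → ℤ × ℤ := fun b => if h : (cover b).Nonempty then f b h else hne.choose with hF
  set G : ℤ → ℤ × ℤ := fun b => if h : (cover b).Nonempty then g b h else hne.choose with hG
  refine ⟨B.image F ∪ B.image G, ?_, ?_, ?_⟩
  · intro p hp
    rcases Finset.mem_union.mp hp with hp | hp <;>
    · obtain ⟨b, _, rfl⟩ := Finset.mem_image.mp hp
      simp only [hF, hG]
      split
      · next h => first
          | exact (hmem b _ (hf b h)).1
          | exact (hmem b _ (hg b h)).1
      · exact hne.choose_spec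
  · calc (B.image F ∪ B.image G).card ≤ (B.image F).card + (B.image G).card :=
          Finset.card_union_le _ _
      _ ≤ B.card + B.card := add_le_add (Finset.card_image_le) (Finset.card_image_le)
      _ = 2 * r := by rw [hBcard]; ring
  · apply Set.Subset.antisymm
    · refine Set.iUnion₂_subset fun p hp => ?_
      have hpP : p ∈ P := by
        rcases Finset.mem_union.mp hp with h | h <;>
        · obtain ⟨b, _, rfl⟩ := Finset.mem_image.mp h
          simp only [hF, hG]
          split
          · next h' => first
              | exact (hmem b _ (hf b h')).1
              | exact (hmem b _ (hg b h')).1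
          · exact hne.choose_spec
      exact Set.subset_iUnion₂ (s := fun p _ => Set.Icc p.1 p.2) p hpP
    · refine Set.iUnion₂_subset fun p hp => fun x hx => ?_
      obtain ⟨b, hb, hb1, hb2⟩ := hcov p hp
      have hpc : p ∈ cover b := by
        simp [hcover, Finset.mem_filter, hp, hb1, hb2]
      have hcne : (cover b).Nonempty := ⟨p, hpc⟩
      rcases le_total x b with hxb | hbx
      · have hFb : F b = f b hcne := by simp [hF, hcne]
        have hmemT : F b ∈ B.image F ∪ B.image G :=
          Finset.mem_union_left _ (Finset.mem_image_of_mem F hb)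
        refine Set.mem_iUnion₂.mpr ⟨F b, hmemT, ?_⟩
        rw [hFb]
        exact ⟨le_trans (hfmin b hcne p hpc) hx.1,
          le_trans hxb (hmem b _ (hf b hcne)).2.2⟩
      · have hGb : G b = g b hcne := by simp [hG, hcne]
        have hmemT : G b ∈ B.image F ∪ B.image G :=
          Finset.mem_union_right _ (Finset.mem_image_of_mem G hb)
        refine Set.mem_iUnion₂.mpr ⟨G b, hmemT, ?_⟩
        rw [hGb]
        exact ⟨le_trans (hmem b _ (hg b hcne)).2.1 hbx,
          le_trans hx.2 (hgmax b hcne p hpc)⟩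
end

section
/- Consider the priority interval cover problem: each timeslot t ∈ ℤ has a priority χ(t) ∈ ℕ, each priority interval I is a triple (s(I), e(I), π(I)) with s(I) ≤ e(I), and I covers timeslot t if s(I) ≤ t ≤ e(I) and π(I) ≥ χ(t). Let X be a finite nonempty set of timeslots and let t₀ ∈ X be a timeslot whose priority χ(t₀) is maximal among all timeslots of X. Then for every finite nonempty family 𝒫 of priority intervals each covering t₀, there exist I₁, I₂ ∈ 𝒫 such that every timeslot x ∈ X covered by some interval of 𝒫 is covered by I₁ or by I₂. In particular, t₀ is a 2-SNC element within X in the associated set system. -/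
/-- A priority interval `I = (s, e, π)` covers the timeslot `t` (with priority
function `χ`) if `s ≤ t ≤ e` and `π ≥ χ t`. -/
def PCovers (χ : ℤ → ℕ) (I : ℤ × ℤ × ℕ) (t : ℤ) : Prop :=
  I.1 ≤ t ∧ t ≤ I.2.1 ∧ χ t ≤ I.2.2

/-- Priority interval cover: if `t₀ ∈ X` has maximal priority among the timeslots
of `X`, then for every finite nonempty family `P` of priority intervals each
covering `t₀`, two intervals of `P` cover every timeslot of `X` covered by some
interval of `P`.  (Hence `t₀` is a 2-SNC element within `X`.) -/
theorem priority_interval_two_SNC (χ : ℤ → ℕ)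
    (X : Finset ℤ) (hX : X.Nonempty) (t₀ : ℤ) (ht₀ : t₀ ∈ X)
    (hmax : ∀ x ∈ X, χ x ≤ χ t₀)
    (P : Finset (ℤ × ℤ × ℕ)) (hne : P.Nonempty)
    (hvalid : ∀ I ∈ P, I.1 ≤ I.2.1)
    (hcov : ∀ I ∈ P, PCovers χ I t₀) :
    ∃ I₁ ∈ P, ∃ I₂ ∈ P, ∀ x ∈ X, (∃ I ∈ P, PCovers χ I x) →
      PCovers χ I₁ x ∨ PCovers χ I₂ x := by
  obtain ⟨I₁, hI₁, hmin⟩ := P.exists_min_image (fun I => I.1) hne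
  obtain ⟨I₂, hI₂, hmax2⟩ := P.exists_max_image (fun I => I.2.1) hne
  refine ⟨I₁, hI₁, I₂, hI₂, fun x hx ⟨I, hIP, hIc⟩ => ?_⟩
  have hχ : χ x ≤ χ t₀ := hmax x hx
  rcases le_total x t₀ with h | h
  · left
    exact ⟨le_trans (hmin I hIP) hIc.1, le_trans h (hcov I₁ hI₁).2.1,
      le_trans hχ (hcov I₁ hI₁).2.2⟩
  · right
    exact ⟨le_trans (hcov I₂ hI₂).1 h, le_trans hIc.2.1 (hmax2 I hIP),
      le_trans hχ (hcov I₂ hI₂).2.2⟩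
end

section
/- Let (V, ≤) be a finite partial order such that for every v ∈ V the set {u ∈ V : v ≤ u} is a chain (this models ancestry in a rooted forest: the ancestors of any node are totally ordered). Let w ∈ V be a minimal element (modeling a leaf edge of the tree), and let 𝒫 be a finite nonempty family of pairs (b, a) ∈ V × V with b ≤ w ≤ a, where a pair (b, a) covers x ∈ V if b ≤ x ≤ a. Then there exists a single pair (b₀, a₀) ∈ 𝒫 that covers every element of V covered by some pair of 𝒫. (This is the 1-SNC property of leaf edges in the tree cover problem.) -/
/-!
Minimality of `w` forces every pair of `P` to start at `w`, so each pair covers exactly the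
interval `[w, a]`. The tops `a` are upper bounds of `w` and hence form a chain, so the pair
with the greatest top covers everything the others do.
-/

theorem Finset.exists_mem_forall_le_of_isChain_image {ι α : Type*} [Preorder α] {s : Finset ι}
    (hs : s.Nonempty) {f : ι → α} (hf : IsChain (· ≤ ·) (f '' s)) :
    ∃ i ∈ s, ∀ j ∈ s, f j ≤ f i := by
  have : Nonempty s := hs.to_subtype
  have hdir : Directed (· ≤ ·) (fun i : s ↦ f i) := fun i j ↦
    (hf.total ⟨i, i.2, rfl⟩ ⟨j, j.2, rfl⟩).elim (fun h ↦ ⟨j, h, le_rfl⟩) fun h ↦ ⟨i, le_rfl, h⟩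
  obtain ⟨⟨i, hi⟩, hmax⟩ := hdir.finset_le Finset.univ
  exact ⟨i, hi, fun j hj ↦ hmax ⟨j, hj⟩ (Finset.mem_univ _)⟩

theorem tree_cover_leaf_one_SNC_general {V : Type*} [PartialOrder V]
    (hchain : ∀ v : V, IsChain (· ≤ ·) {u : V | v ≤ u})
    (w : V) (hmin : IsMin w)
    (P : Finset (V × V)) (hne : P.Nonempty)
    (hcov : ∀ p ∈ P, p.1 ≤ w ∧ w ≤ p.2) :
    ∃ p ∈ P, ∀ x : V, (∃ q ∈ P, q.1 ≤ x ∧ x ≤ q.2) → p.1 ≤ x ∧ x ≤ p.2 := by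
  have hfst : ∀ p ∈ P, p.1 = w := fun p hp ↦ hmin.eq_of_le (hcov p hp).1
  have htops : IsChain (· ≤ ·) (Prod.snd '' (P : Set (V × V))) :=
    (hchain w).mono <| by rintro _ ⟨q, hq, rfl⟩; exact (hcov q hq).2
  obtain ⟨p, hp, hgreatest⟩ := P.exists_mem_forall_le_of_isChain_image hne htops
  refine ⟨p, hp, ?_⟩
  rintro x ⟨q, hq, hqx, hxq⟩
  exact ⟨(hfst p hp).trans_le (hfst q hq ▸ hqx), hxq.trans (hgreatest q hq)⟩

/-- Tree cover, 1-SNC property of leaf edges: in a finite partial order where the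
set of upper bounds of every element is a chain (ancestry in a rooted forest), if
`w` is minimal (a leaf edge) and `P` is a finite nonempty family of pairs
`(b, a)` with `b ≤ w ≤ a` (intervals covering `w`), then a single pair of `P`
covers every element covered by some pair of `P`. -/
theorem tree_cover_leaf_one_SNC {V : Type*} [Fintype V] [PartialOrder V]
    (hchain : ∀ v : V, IsChain (· ≤ ·) {u : V | v ≤ u})
    (w : V) (hmin : IsMin w)
    (P : Finset (V × V)) (hne : P.Nonempty)
    (hcov : ∀ p ∈ P, p.1 ≤ w ∧ w ≤ p.2) :
    ∃ p ∈ P, ∀ x : V, (∃ q ∈ P, q.1 ≤ x ∧ x ≤ q.2) → p.1 ≤ x ∧ x ≤ p.2 :=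
  tree_cover_leaf_one_SNC_general hchain w hmin P hne hcov
end

section
/- Let (V, ≤) be a finite partial order such that for every v ∈ V the set {u ∈ V : v ≤ u} is a chain (modeling ancestry in a rooted forest). Let w ∈ V be an element such that the set {u ∈ V : u ≤ w} is also a chain (modeling an edge lying on a chain of the tree, i.e., a path leading down to a leaf with no junctions below). Let 𝒫 be a finite nonempty family of pairs (b, a) ∈ V × V with b ≤ w ≤ a, where a pair (b, a) covers x ∈ V if b ≤ x ≤ a. Then there exist two pairs (b₁, a₁), (b₂, a₂) ∈ 𝒫 such that every element of V covered by some pair of 𝒫 is covered by (b₁, a₁) or by (b₂, a₂). (This is the 2-SNC property of chain edges in the tree cover problem.) -/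
/-! The interval `p` with the lowest bottom and the interval `q` with the highest top suffice:
these extremes exist because all bottoms lie in the chain below `w` and all tops in the chain
above `w`. An element `x` covered by some `(b, a)` is comparable with `w`, as both lie above `b`;
if `x ≤ w` then `p` covers `x`, and if `w ≤ x` then `q` does. -/

theorem IsChain.exists_min_image {ι α : Type*} [Preorder α] {c : Set α}
    (hc : IsChain (· ≤ ·) c) (f : ι → α) {s : Finset ι} (hs : s.Nonempty)
    (hf : ∀ i ∈ s, f i ∈ c) : ∃ i ∈ s, ∀ j ∈ s, f i ≤ f j := by
  obtain ⟨i, hi⟩ := s.exists_minimalFor f hs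
  exact ⟨i, hi.1, fun j hj => hc.le_of_not_gt (hf j hj) (hf i hi.1) (hi.not_lt hj)⟩

theorem IsChain.exists_max_image {ι α : Type*} [Preorder α] {c : Set α}
    (hc : IsChain (· ≤ ·) c) (f : ι → α) {s : Finset ι} (hs : s.Nonempty)
    (hf : ∀ i ∈ s, f i ∈ c) : ∃ i ∈ s, ∀ j ∈ s, f j ≤ f i := by
  obtain ⟨i, hi⟩ := s.exists_maximalFor f hs
  exact ⟨i, hi.1, fun j hj => hc.le_of_not_gt (hf i hi.1) (hf j hj) (hi.not_gt hj)⟩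

theorem tree_cover_chain_two_SNC_general {V : Type*} [PartialOrder V]
    (hchain : ∀ v : V, IsChain (· ≤ ·) {u : V | v ≤ u})
    (w : V) (hdesc : IsChain (· ≤ ·) {u : V | u ≤ w})
    (P : Finset (V × V)) (hne : P.Nonempty)
    (hcov : ∀ p ∈ P, p.1 ≤ w ∧ w ≤ p.2) :
    ∃ p ∈ P, ∃ q ∈ P, ∀ x : V, (∃ s ∈ P, s.1 ≤ x ∧ x ≤ s.2) →
      (p.1 ≤ x ∧ x ≤ p.2) ∨ (q.1 ≤ x ∧ x ≤ q.2) := by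
  obtain ⟨p, hp, hp_le⟩ := hdesc.exists_min_image Prod.fst hne fun s hs => (hcov s hs).1
  obtain ⟨q, hq, hq_ge⟩ := (hchain w).exists_max_image Prod.snd hne fun s hs => (hcov s hs).2
  refine ⟨p, hp, q, hq, ?_⟩
  rintro x ⟨s, hs, hsx, hxs⟩
  rcases (hchain s.1).total hsx (hcov s hs).1 with hxw | hwx
  · exact .inl ⟨(hp_le s hs).trans hsx, hxw.trans (hcov p hp).2⟩
  · exact .inr ⟨(hcov q hq).1.trans hwx, hxs.trans (hq_ge s hs)⟩

/-- Tree cover, 2-SNC property of chain edges: in a finite partial order where the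
set of upper bounds of every element is a chain (ancestry in a rooted forest), if
`w` is an element whose set of lower bounds is also a chain (a chain edge) and
`P` is a finite nonempty family of pairs `(b, a)` with `b ≤ w ≤ a` (intervals
covering `w`), then two pairs of `P` cover every element covered by some pair
of `P`. -/
theorem tree_cover_chain_two_SNC {V : Type*} [Fintype V] [PartialOrder V]
    (hchain : ∀ v : V, IsChain (· ≤ ·) {u : V | v ≤ u})
    (w : V) (hdesc : IsChain (· ≤ ·) {u : V | u ≤ w})
    (P : Finset (V × V)) (hne : P.Nonempty)
    (hcov : ∀ p ∈ P, p.1 ≤ w ∧ w ≤ p.2) :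
    ∃ p ∈ P, ∃ q ∈ P, ∀ x : V, (∃ s ∈ P, s.1 ≤ x ∧ x ≤ s.2) →
      (p.1 ≤ x ∧ x ≤ p.2) ∨ (q.1 ≤ x ∧ x ≤ q.2) :=
  tree_cover_chain_two_SNC_general hchain w hdesc P hne hcov
end

section
/- Let E be a finite universe, 𝒳 a family of subsets of E, e ∈ E, and τ ≥ 1 an integer. Suppose there exist sets S₁, …, S_r ∈ 𝒳 with r ≤ τ (the petals of e) such that every element x ∈ E lying together with e in some set of 𝒳 belongs to some S_i. Let C ⊆ E be a set of anchors such that no set of 𝒳 contains two distinct elements of C, and suppose each anchor a ∈ C is assigned a family petals(a) ⊆ {S ∈ 𝒳 : a ∈ S} with |petals(a)| ≤ τ. Then the number of sets in ⋃_{a∈C} petals(a) that contain e is at most τ². (This yields the τ² primal-slackness bound in the reverse-delete phase of the parallel algorithm.) -/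
/-!
An anchor whose petals meet `e` shares a set of `𝒳` with `e`, so it lies in one of the at most
`τ` petals of `e`; as no set of `𝒳` contains two anchors, there are at most `τ` such anchors.
Each of them contributes at most `τ` sets, whence the bound `τ²`.
-/

open Finset

namespace ReverseDelete

variable {α : Type*}

def PairwiseIndependent (𝒳 : Finset (Finset α)) (C : Finset α) : Prop :=
  ∀ S ∈ 𝒳, ∀ a ∈ C, ∀ b ∈ C, a ∈ S → b ∈ S → a = b

theorem PairwiseIndependent.card_le_of_forall_exists_mem {𝒳 R : Finset (Finset α)}
    {C : Finset α} (hind : PairwiseIndependent 𝒳 C) (hR𝒳 : R ⊆ 𝒳)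
    (hcov : ∀ a ∈ C, ∃ S ∈ R, a ∈ S) : #C ≤ #R :=
  card_le_card_of_forall_subsingleton (· ∈ ·) hcov fun S hS _ ⟨ha, haS⟩ _ ⟨hb, hbS⟩ =>
    hind S (hR𝒳 hS) _ ha _ hb haS hbS

theorem filter_biUnion_subset_biUnion_filter {ι β : Type*} [DecidableEq β] (s : Finset ι)
    (f : ι → Finset β) (p : β → Prop) [DecidablePred p] :
    {x ∈ s.biUnion f | p x} ⊆ {i ∈ s | ∃ x ∈ f i, p x}.biUnion f := by
  intro x hx
  obtain ⟨⟨i, hi, hxi⟩, hpx⟩ : (∃ i ∈ s, x ∈ f i) ∧ p x := by simpa using hx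
  exact mem_biUnion.2 ⟨i, mem_filter.2 ⟨hi, x, hxi, hpx⟩, hxi⟩

end ReverseDelete

open ReverseDelete in
theorem petals_containing_e_le_tau_sq_general {α : Type*} [DecidableEq α]
    (𝒳 : Finset (Finset α)) (e : α) (τ : ℕ)
    (R : Finset (Finset α)) (hR𝒳 : R ⊆ 𝒳)
    (hRcard : R.card ≤ τ)
    (hpetal : ∀ x : α, (∃ S ∈ 𝒳, e ∈ S ∧ x ∈ S) → ∃ S ∈ R, x ∈ S)
    (C : Finset α)
    (hind : ∀ S ∈ 𝒳, ∀ a ∈ C, ∀ b ∈ C, a ∈ S → b ∈ S → a = b)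
    (petals : α → Finset (Finset α))
    (hpet𝒳 : ∀ a ∈ C, ∀ S ∈ petals a, S ∈ 𝒳 ∧ a ∈ S)
    (hpetcard : ∀ a ∈ C, (petals a).card ≤ τ) :
    ((C.biUnion petals).filter (fun S => e ∈ S)).card ≤ τ ^ 2 := by
  set C' := {a ∈ C | ∃ S ∈ petals a, e ∈ S}
  have hC'_covered : ∀ a ∈ C', ∃ S ∈ R, a ∈ S := by
    intro a ha
    obtain ⟨haC, S, hS, heS⟩ := mem_filter.1 ha
    exact hpetal a ⟨S, (hpet𝒳 a haC S hS).1, heS, (hpet𝒳 a haC S hS).2⟩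
  have hC'_card : #C' ≤ τ :=
    (PairwiseIndependent.card_le_of_forall_exists_mem (C := C')
      (fun S hS a ha b hb => hind S hS a (mem_filter.1 ha).1 b (mem_filter.1 hb).1)
      hR𝒳 hC'_covered).trans hRcard
  calc #{S ∈ C.biUnion petals | e ∈ S}
      ≤ #(C'.biUnion petals) := card_le_card (filter_biUnion_subset_biUnion_filter _ _ _)
    _ ≤ #C' * τ := card_biUnion_le_card_mul _ _ _ fun a ha => hpetcard a (mem_filter.1 ha).1
    _ ≤ τ ^ 2 := by rw [sq]; exact Nat.mul_le_mul_right τ hC'_card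

/-- The `τ²` bound of the reverse-delete phase: if `e` has at most `τ` petals
`R ⊆ 𝒳` (sets of `𝒳` containing `e` covering every element sharing a set of `𝒳`
with `e`), `C` is a set of pairwise independent anchors, and each anchor `a ∈ C`
is assigned at most `τ` petals (sets of `𝒳` containing `a`), then at most `τ²`
of the sets in the union of the anchors' petals contain `e`. -/
theorem petals_containing_e_le_tau_sq {α : Type*} [Fintype α] [DecidableEq α]
    (𝒳 : Finset (Finset α)) (e : α) (τ : ℕ) (hτ : 1 ≤ τ)
    (R : Finset (Finset α)) (hR𝒳 : R ⊆ 𝒳) (hRe : ∀ S ∈ R, e ∈ S)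
    (hRcard : R.card ≤ τ)
    (hpetal : ∀ x : α, (∃ S ∈ 𝒳, e ∈ S ∧ x ∈ S) → ∃ S ∈ R, x ∈ S)
    (C : Finset α)
    (hind : ∀ S ∈ 𝒳, ∀ a ∈ C, ∀ b ∈ C, a ∈ S → b ∈ S → a = b)
    (petals : α → Finset (Finset α))
    (hpet𝒳 : ∀ a ∈ C, ∀ S ∈ petals a, S ∈ 𝒳 ∧ a ∈ S)
    (hpetcard : ∀ a ∈ C, (petals a).card ≤ τ) :
    ((C.biUnion petals).filter (fun S => e ∈ S)).card ≤ τ ^ 2 :=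
  petals_containing_e_le_tau_sq_general 𝒳 e τ R hR𝒳 hRcard hpetal C hind petals hpet𝒳 hpetcard
end
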